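/- Let κ < λ be regular cardinals with 2^κ ≥ λ, and let P be a κ⁺-closed partial order. If T is a λ-tree, then forcing with P adds no new cofinal branch to T; i.e., every cofinal branch of T in a P-generic extension lies in the ground model. -/

import Mathlib

open Cardinal

universe u

/-- A partial order is κ-closed if every decreasing sequence of conditions of
length (order type) less than κ has a lower bound; κ⁺-closed thus means every
decreasing sequence of length ≤ κ has a lower bound. -/
def KClosed (κ : Cardinal.{u}) (P : Type u) [Preorder P] : Prop :=
  ∀ (ι : Type u) [LinearOrder ι] [WellFoundedLT ι], #ι < κ →
    ∀ f : ι → P, Antitone f → ∃ b, ∀ i, b ≤ f i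

/-- A λ-tree: a partial order in which the set of predecessors of every node is
well-ordered (witnessed by the level function `lvl`), of height λ, with all
levels of size less than λ. -/
structure KTree (lam : Cardinal.{u}) where
  carrier : Type u
  po : PartialOrder carrier
  lvl : carrier → Ordinal.{u}
  lvl_lt : ∀ t, lvl t < lam.ord
  lvl_strictMono : ∀ s t, po.lt s t → lvl s < lvl t
  preds : ∀ t, ∀ β < lvl t, ∃! s, po.lt s t ∧ lvl s = β
  levels_nonempty : ∀ β < lam.ord, ∃ t, lvl t = β
  levels_small : ∀ β, #{t // lvl t = β} < lam

/-- A cofinal branch: a chain of the tree meeting every level. -/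
def IsCofBranch {lam : Cardinal.{u}} (S : KTree lam) (b : Set S.carrier) : Prop :=
  (∀ s ∈ b, ∀ t ∈ b, S.po.le s t ∨ S.po.le t s) ∧ ∀ β < lam.ord, ∃ t ∈ b, S.lvl t = β

/-- A `P`-name for a cofinal branch of the tree `S`: `F p t` states that the
condition `p` forces `t` to belong to the named branch. -/
structure BranchName (P : Type u) [Preorder P] {lam : Cardinal.{u}} (S : KTree lam) where
  F : P → S.carrier → Prop
  mono : ∀ p q t, p ≤ q → F q t → F p t
  forcesChain : ∀ p s t, F p s → F p t → S.po.le s t ∨ S.po.le t s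
  cof : ∀ p : P, ∀ β < lam.ord, ∃ q, q ≤ p ∧ ∃ t, S.lvl t = β ∧ F q t

/-!
If some condition below `p` decides the named branch, the nodes forced by its extensions form a
cofinal branch in the ground model. Otherwise every condition has two extensions forcing
incomparable nodes. Let `μ ≤ κ` be least with `λ ≤ 2 ^ μ`. Closure under sequences of length `≤ κ`
lets us build a binary tree of conditions of height `μ` that splits at every node. Its `2 ^ {< μ}`
splitting nodes (fewer than `λ`, by regularity of `λ`) lie below a single level `β < λ`, and the
`2 ^ μ ≥ λ` branches of the tree force pairwise distinct nodes on level `β`, which is too many.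
-/

instance KTree.instPartialOrder {lam : Cardinal.{u}} (S : KTree lam) : PartialOrder S.carrier :=
  S.po

namespace KTree

variable {lam : Cardinal.{u}} (S : KTree lam)

theorem eq_of_lt_of_lt_of_lvl_eq {s s' t : S.carrier} (hs : s < t) (hs' : s' < t)
    (h : S.lvl s = S.lvl s') : s = s' := by
  obtain ⟨w, -, hw⟩ := S.preds t (S.lvl s) (S.lvl_strictMono _ _ hs)
  exact (hw s ⟨hs, rfl⟩).trans (hw s' ⟨hs', h.symm⟩).symm

theorem le_of_lt_of_lt_of_lvl_le {s s' t : S.carrier} (hs : s < t) (hs' : s' < t)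
    (h : S.lvl s ≤ S.lvl s') : s ≤ s' := by
  rcases h.eq_or_lt with h | h
  · exact (S.eq_of_lt_of_lt_of_lvl_eq hs hs' h).le
  · obtain ⟨w, ⟨hws', hw⟩, -⟩ := S.preds s' (S.lvl s) h
    exact (S.eq_of_lt_of_lt_of_lvl_eq hs (hws'.trans hs') hw.symm).le.trans hws'.le

theorem le_total_of_le {s s' t : S.carrier} (hs : s ≤ t) (hs' : s' ≤ t) : s ≤ s' ∨ s' ≤ s := by
  rcases hs.eq_or_lt with rfl | hs
  · exact Or.inr hs'
  rcases hs'.eq_or_lt with rfl | hs'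
  · exact Or.inl hs.le
  rcases le_total (S.lvl s) (S.lvl s') with h | h
  · exact Or.inl (S.le_of_lt_of_lt_of_lvl_le hs hs' h)
  · exact Or.inr (S.le_of_lt_of_lt_of_lvl_le hs' hs h)

theorem le_of_le_total_of_lvl_le {s t : S.carrier} (h : s ≤ t ∨ t ≤ s)
    (hl : S.lvl s ≤ S.lvl t) : s ≤ t := by
  rcases h with h | h
  · exact h
  rcases h.eq_or_lt with rfl | h
  · rfl
  · exact absurd hl (S.lvl_strictMono _ _ h).not_ge

theorem exists_lvl_le_of_mk_lt (hlam : lam.IsRegular) {J : Type u} (hJ : #J < lam)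
    (f : J → S.carrier) : ∃ β < lam.ord, ∀ j, S.lvl (f j) ≤ β :=
  ⟨⨆ j, S.lvl (f j),
    Ordinal.iSup_lt_of_lt_cof (hlam.cof_ord.symm ▸ hJ) fun _ => S.lvl_lt _,
    Ordinal.le_iSup _⟩

end KTree

theorem KClosed.Iic {κ : Cardinal.{u}} {P : Type u} [Preorder P] (h : KClosed κ P) (p : P) :
    KClosed κ (Set.Iic p) := by
  intro ι _ _ hι f hf
  obtain ⟨b, hb⟩ := h ι hι (Subtype.val ∘ f) fun i j hij => hf hij
  by_cases hne : Nonempty ι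
  · exact ⟨⟨b, (hb hne.some).trans (f hne.some).2⟩, hb⟩
  · exact ⟨⟨p, le_rfl⟩, fun i => (hne ⟨i⟩).elim⟩

theorem Cardinal.mk_sigma_Iio_arrow_bool_lt {lam : Cardinal.{u}} (hlam : lam.IsRegular)
    {ι : Type u} [LinearOrder ι] (hι : #ι < lam) (h : ∀ i : ι, 2 ^ #(Set.Iio i) < lam) :
    #(Σ i : ι, Set.Iio i → Bool) < lam := by
  rw [mk_sigma]
  refine sum_lt_of_isRegular hlam hι fun i => ?_
  rw [mk_arrow, mk_bool, lift_ofNat, lift_uzero]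
  exact h i

theorem Cardinal.exists_min_le_two_power {lam κ : Cardinal.{u}} (h : lam ≤ 2 ^ κ) :
    ∃ μ ≤ κ, lam ≤ 2 ^ μ ∧ ∀ ν < μ, 2 ^ ν < lam :=
  ⟨sInf {ν | lam ≤ 2 ^ ν}, csInf_le' h, csInf_mem (s := {ν | lam ≤ 2 ^ ν}) ⟨κ, h⟩,
    fun _ hν => not_le.mp (notMem_of_lt_csInf (s := {ν | lam ≤ 2 ^ ν}) hν (OrderBot.bddBelow _))⟩

section SplitSeq

variable {P : Type u} [Preorder P] [Nonempty P] {ι : Type u} [LinearOrder ι] [WellFoundedLT ι]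
  (σ : Bool → P → P)

/-- The binary tree of conditions along the bit sequence `x`: at stage `i` take a lower bound of
all earlier conditions and extend it by `σ (x i)`. -/
noncomputable def splitSeq (x : ι → Bool) : ι → P :=
  wellFounded_lt.fix fun i IH =>
    σ (x i) (Classical.epsilon fun b => ∀ j (hj : j < i), b ≤ IH j hj)

noncomputable def splitStem (x : ι → Bool) (i : ι) : P :=
  Classical.epsilon fun b => ∀ j < i, b ≤ splitSeq σ x j

theorem splitSeq_eq (x : ι → Bool) (i : ι) :
    splitSeq σ x i = σ (x i) (splitStem σ x i) :=
  wellFounded_lt.fix_eq _ i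

theorem splitSeq_congr {x y : ι → Bool} (i : ι) (h : ∀ j ≤ i, x j = y j) :
    splitSeq σ x i = splitSeq σ y i := by
  induction i using WellFoundedLT.induction with
  | ind i ih =>
    have hstem : splitStem σ x i = splitStem σ y i := by
      unfold splitStem
      congr 1
      ext b
      exact forall₂_congr fun j hj => by rw [ih j hj fun k hk => h k (hk.trans hj.le)]
    rw [splitSeq_eq, splitSeq_eq, h i le_rfl, hstem]

theorem splitStem_congr {x y : ι → Bool} (i : ι) (h : ∀ j < i, x j = y j) :
    splitStem σ x i = splitStem σ y i := by
  unfold splitStem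
  congr 1
  ext b
  exact forall₂_congr fun j hj => by rw [splitSeq_congr σ j fun k hk => h k (hk.trans_lt hj)]

variable {σ} {κ : Cardinal.{u}} (hP : KClosed (Order.succ κ) P) (hι : #ι ≤ κ)
  (hσ : ∀ b q, σ b q ≤ q)
include hP hι hσ

theorem splitStem_le (x : ι → Bool) (i : ι) : ∀ j < i, splitStem σ x i ≤ splitSeq σ x j := by
  induction i using WellFoundedLT.induction with
  | ind i ih =>
    have hanti : Antitone fun j : Set.Iio i => splitSeq σ x j := by
      intro j k hjk
      rcases (Subtype.coe_le_coe.mpr hjk).eq_or_lt with h | h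
      · exact (congrArg (splitSeq σ x) h).ge
      · exact (splitSeq_eq σ x k ▸ hσ _ _).trans (ih k k.2 j h)
    have hex : ∃ b, ∀ j < i, b ≤ splitSeq σ x j := by
      obtain ⟨b, hb⟩ := hP (Set.Iio i) (Order.lt_succ_of_le ((mk_set_le _).trans hι)) _ hanti
      exact ⟨b, fun j hj => hb ⟨j, hj⟩⟩
    exact Classical.epsilon_spec hex

theorem splitSeq_antitone (x : ι → Bool) : Antitone (splitSeq σ x) := by
  intro j k hjk
  rcases hjk.eq_or_lt with rfl | h
  · rfl
  · exact (splitSeq_eq σ x k ▸ hσ _ _).trans (splitStem_le hP hι hσ x k j h)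

theorem exists_le_splitSeq (x : ι → Bool) : ∃ r, ∀ i, r ≤ splitSeq σ x i :=
  hP ι (Order.lt_succ_of_le hι) _ (splitSeq_antitone hP hι hσ x)

end SplitSeq

namespace BranchName

variable {P : Type u} [Preorder P] {lam : Cardinal.{u}} {S : KTree lam} (N : BranchName P S)

def Decides (q : P) : Prop :=
  ∀ r₀ ≤ q, ∀ r₁ ≤ q, ∀ t₀ t₁, N.F r₀ t₀ → N.F r₁ t₁ → t₀ ≤ t₁ ∨ t₁ ≤ t₀

theorem isCofBranch_of_decides {q : P} (hq : N.Decides q) :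
    IsCofBranch S {t | ∃ r ≤ q, N.F r t} :=
  ⟨fun s ⟨r, hr, hs⟩ t ⟨r', hr', ht⟩ => hq r hr r' hr' s t hs ht,
    fun β hβ =>
      let ⟨q', hq', t, ht, hF⟩ := N.cof q β hβ
      ⟨t, ⟨q', hq', hF⟩, ht⟩⟩

def restrict (p : P) : BranchName (Set.Iic p) S where
  F q t := N.F q t
  mono _ _ t h := N.mono _ _ t h
  forcesChain q := N.forcesChain q
  cof q β hβ :=
    let ⟨q', hq', t, ht, hF⟩ := N.cof q β hβ
    ⟨⟨q', hq'.trans q.2⟩, hq', t, ht, hF⟩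

theorem decides_of_restrict {p : P} {q : Set.Iic p} (h : (N.restrict p).Decides q) :
    N.Decides q :=
  fun r₀ h₀ r₁ h₁ => h ⟨r₀, h₀.trans q.2⟩ h₀ ⟨r₁, h₁.trans q.2⟩ h₁

structure Splitting where
  cond : Bool → P → P
  node : Bool → P → S.carrier
  cond_le : ∀ b q, cond b q ≤ q
  forces : ∀ b q, N.F (cond b q) (node b q)
  not_le_total : ∀ q, ¬ (node false q ≤ node true q ∨ node true q ≤ node false q)

theorem nonempty_splitting (h : ∀ q, ¬ N.Decides q) : Nonempty N.Splitting := by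
  simp only [Decides, not_forall, not_or] at h
  choose r₀ h₀ r₁ h₁ t₀ t₁ hF₀ hF₁ hinc using h
  exact ⟨{ cond := fun b q => bif b then r₁ q else r₀ q
           node := fun b q => bif b then t₁ q else t₀ q
           cond_le := fun b q => by cases b <;> simp [h₀, h₁]
           forces := fun b q => by cases b <;> simp [hF₀, hF₁]
           not_le_total := fun q => not_or.mpr (hinc q) }⟩

namespace Splitting

variable {N} (sp : N.Splitting)

theorem not_le_total_of_ne {b b' : Bool} (h : b ≠ b') (q : P) :
    ¬ (sp.node b q ≤ sp.node b' q ∨ sp.node b' q ≤ sp.node b q) := by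
  cases b <;> cases b'
  · exact absurd rfl h
  · exact sp.not_le_total q
  · exact or_comm.not.mp (sp.not_le_total q)
  · exact absurd rfl h

variable [Nonempty P] {ι : Type u} [LinearOrder ι] [WellFoundedLT ι]

theorem node_le {x : ι → Bool} {i : ι} {q : P} {t : S.carrier} (hq : q ≤ splitSeq sp.cond x i)
    (ht : N.F q t) (hl : S.lvl (sp.node (x i) (splitStem sp.cond x i)) ≤ S.lvl t) :
    sp.node (x i) (splitStem sp.cond x i) ≤ t :=
  S.le_of_le_total_of_lvl_le
    (N.forcesChain q _ _ (N.mono _ _ _ (splitSeq_eq sp.cond x i ▸ hq) (sp.forces _ _)) ht) hl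

/-- Each stem depends only on an initial segment of the bit sequence, so there are fewer than `λ`
stems. -/
theorem exists_lvl_node_le (hlam : lam.IsRegular) (hι : #ι < lam)
    (hIio : ∀ i : ι, 2 ^ #(Set.Iio i) < lam) :
    ∃ β < lam.ord, ∀ (x : ι → Bool) i b, S.lvl (sp.node b (splitStem sp.cond x i)) ≤ β := by
  have hJ : #(Bool × Σ i : ι, Set.Iio i → Bool) < lam := by
    rw [mk_prod, mk_bool, lift_ofNat, lift_uzero]
    exact mul_lt_of_lt hlam.aleph0_le ((natCast_lt_aleph0 (n := 2)).trans_le hlam.aleph0_le)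
      (mk_sigma_Iio_arrow_bool_lt hlam hι hIio)
  obtain ⟨β, hβ, hle⟩ := S.exists_lvl_le_of_mk_lt hlam hJ fun ⟨b, i, s⟩ =>
    sp.node b (splitStem sp.cond (fun j => if h : j < i then s ⟨j, h⟩ else false) i)
  refine ⟨β, hβ, fun x i b => ?_⟩
  rw [splitStem_congr sp.cond i (y := fun j => if j < i then x j else false)
    fun j hj => (if_pos hj).symm]
  exact hle (b, ⟨i, fun j => x j⟩)

theorem injective_of_forces {β : Ordinal.{u}}
    (hnode : ∀ (x : ι → Bool) i b, S.lvl (sp.node b (splitStem sp.cond x i)) ≤ β)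
    {q : (ι → Bool) → P} {t : (ι → Bool) → S.carrier} (hq : ∀ x i, q x ≤ splitSeq sp.cond x i)
    (ht : ∀ x, S.lvl (t x) = β) (hF : ∀ x, N.F (q x) (t x)) : Function.Injective t := by
  intro x y hxy
  by_contra hne
  obtain ⟨i, hi, hmin⟩ := wellFounded_lt.has_min {i | x i ≠ y i} (Function.ne_iff.mp hne)
  have hstem : splitStem sp.cond x i = splitStem sp.cond y i :=
    splitStem_congr _ i fun j hj => by_contra fun h => hmin j h hj
  have hx := sp.node_le (hq x i) (hF x) ((hnode x i _).trans (ht x).ge)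
  have hy := sp.node_le (hq y i) (hF y) ((hnode y i _).trans (ht y).ge)
  rw [hstem, hxy] at hx
  exact sp.not_le_total_of_ne hi _ (S.le_total_of_le hx hy)

end Splitting

variable {κ : Cardinal.{u}} [Nonempty P]

/-- Distinct bit sequences `x : ι → Bool` lead to distinct nodes on one level, so that level has at
least `2 ^ #ι ≥ λ` elements. -/
theorem isEmpty_splitting (hlam : lam.IsRegular) (hκ : κ < lam)
    (hP : KClosed (Order.succ κ) P) {ι : Type u} [LinearOrder ι] [WellFoundedLT ι]
    (hι : #ι ≤ κ) (hpow : lam ≤ 2 ^ #ι) (hIio : ∀ i : ι, 2 ^ #(Set.Iio i) < lam) :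
    IsEmpty N.Splitting := by
  refine ⟨fun sp => ?_⟩
  obtain ⟨β, hβ, hnode⟩ := sp.exists_lvl_node_le hlam (hι.trans_lt hκ) hIio
  have hbranch : ∀ x : ι → Bool, ∃ q, (∀ i, q ≤ splitSeq sp.cond x i) ∧
      ∃ t, S.lvl t = β ∧ N.F q t := fun x =>
    let ⟨r, hr⟩ := exists_le_splitSeq hP hι sp.cond_le x
    let ⟨q, hq, t, ht, hF⟩ := N.cof r β hβ
    ⟨q, fun i => hq.trans (hr i), t, ht, hF⟩
  choose q hq t ht hF using hbranch
  have hinj := sp.injective_of_forces hnode hq ht hF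
  have hlevel : lam ≤ #{t : S.carrier // S.lvl t = β} :=
    calc lam ≤ 2 ^ #ι := hpow
      _ = #(ι → Bool) := by rw [mk_arrow, mk_bool, lift_ofNat, lift_uzero]
      _ ≤ #{t : S.carrier // S.lvl t = β} :=
        mk_le_of_injective (f := fun x => ⟨t x, ht x⟩) fun x y h => hinj (congrArg Subtype.val h)
  exact (hlevel.trans_lt (S.levels_small β)).false

/-- Take for `ι` the initial well-order of the least `μ` with `λ ≤ 2 ^ μ`. -/
theorem exists_decides (hlam : lam.IsRegular) (hκ : κ < lam) (hpow : lam ≤ 2 ^ κ)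
    (hP : KClosed (Order.succ κ) P) : ∃ q, N.Decides q := by
  by_contra h
  obtain ⟨μ, hμκ, hlamμ, hμmin⟩ := exists_min_le_two_power hpow
  have hIio (i : μ.ord.ToType) : 2 ^ #(Set.Iio i) < lam :=
    hμmin _ <| (mk_Iio_lt i (by rw [mk_ord_toType, Ordinal.type_toType])).trans_eq
      (mk_ord_toType μ)
  have hsplit := N.nonempty_splitting (not_exists.mp h)
  refine (N.isEmpty_splitting hlam hκ hP (ι := μ.ord.ToType) ?_ ?_ hIio).false hsplit.some
  · rw [mk_ord_toType]; exact hμκ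
  · rw [mk_ord_toType]; exact hlamμ

end BranchName

theorem silver_no_new_branch_general {κ lam : Cardinal.{u}}
    (hlam : lam.IsRegular) (hlt : κ < lam)
    (hpow : lam ≤ 2 ^ κ)
    {P : Type u} [PartialOrder P] (hclosed : KClosed (Order.succ κ) P)
    (S : KTree lam) (N : BranchName P S) :
    ∀ p : P, ∃ q, q ≤ p ∧ ∃ b : Set S.carrier, IsCofBranch S b ∧
      ∀ r, r ≤ q → ∀ t, N.F r t → t ∈ b := by
  intro p
  have : Nonempty (Set.Iic p) := ⟨⟨p, le_rfl⟩⟩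
  obtain ⟨q, hq⟩ := (N.restrict p).exists_decides hlam hlt hpow (hclosed.Iic p)
  exact ⟨q, q.2, _, N.isCofBranch_of_decides (N.decides_of_restrict hq),
    fun r hr t ht => ⟨r, hr, ht⟩⟩

/-- Silver's branch lemma: if κ < λ are regular, 2^κ ≥ λ and `P` is κ⁺-closed,
then forcing with `P` adds no new cofinal branch to a λ-tree: every cofinal
branch of the tree in a `P`-generic extension lies in the ground model. -/
theorem silver_no_new_branch {κ lam : Cardinal.{u}}
    (hκ : κ.IsRegular) (hlam : lam.IsRegular) (hlt : κ < lam)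
    (hpow : lam ≤ 2 ^ κ)
    {P : Type u} [PartialOrder P] (hclosed : KClosed (Order.succ κ) P)
    (S : KTree lam) (N : BranchName P S) :
    ∀ p : P, ∃ q, q ≤ p ∧ ∃ b : Set S.carrier, IsCofBranch S b ∧
      ∀ r, r ≤ q → ∀ t, N.F r t → t ∈ b :=
  silver_no_new_branch_general hlam hlt hpow hclosed S N
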